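/- Let f(z) = Σ_{n≥1} a_n z^n be analytic on the unit disk with |f(z)| ≤ 1 and f(0) = 0 (a Schwarz function). Then for all r with 0 ≤ r ≤ 1 − √(2/3), the inequality Σ_{n≥0} (n+1)|a_{n+1}| r^n ≤ 1 holds, i.e., the majorant series of f' at r is at most 1. -/

import Mathlib

/-!
Write `g = dslope f 0`, i.e. `g z = f z / z`: its coefficients are `a (n + 1)`, and by Schwarz's
lemma `g` still maps the unit disc into the closed unit disc. For such `g = ∑ bₙ zⁿ`, Wiener's
estimate `‖bₙ‖ ≤ 1 - ‖b₀‖²` (`n ≥ 1`) is the Schwarz–Pick bound `‖H' 0‖ ≤ 1 - ‖H 0‖²` applied to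
`H (zⁿ) = n⁻¹ ∑ⱼ g (ωʲ z)`, `ω` a primitive `n`-th root of unity, whose expansion is
`∑ₖ b (n k) wᵏ`. With `t = ‖a 1‖` the majorant series is therefore at most
`t + (1 - t²) (1 / (1 - r)² - 1)`, and `1 / (1 - r)² ≤ 3 / 2` exactly when `r ≤ 1 - √(2/3)`,
which leaves `t + (1 - t²) / 2 = 1 - (1 - t)² / 2 ≤ 1`.
-/

open Metric Set Filter Topology Complex ComplexConjugate Finset FormalMultilinearSeries

theorem hasSum_mul_zero_pow {R : Type*} [Semiring R] [TopologicalSpace R] (a : ℕ → R) :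
    HasSum (fun n => a n * 0 ^ n) (a 0) := by
  simpa using hasSum_single (f := fun n => a n * (0 : R) ^ n) 0 fun n hn => by simp [hn]

theorem Metric.eball_one_eq_ball {α : Type*} [PseudoMetricSpace α] (x : α) :
    eball x 1 = ball x 1 := by
  simpa using eball_ofReal (x := x) (ε := 1)

theorem IsPrimitiveRoot.sum_pow_pow_eq_ite {R : Type*} [CommRing R] [IsDomain R] {ω : R} {n : ℕ}
    (hω : IsPrimitiveRoot ω n) (m : ℕ) :
    ∑ j ∈ range n, (ω ^ m) ^ j = if n ∣ m then (n : R) else 0 := by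
  split_ifs with h
  · simp [(hω.pow_eq_one_iff_dvd m).2 h]
  · have hne : ω ^ m - 1 ≠ 0 := sub_ne_zero.2 fun h' => h ((hω.pow_eq_one_iff_dvd m).1 h')
    have hmul : (∑ j ∈ range n, (ω ^ m) ^ j) * (ω ^ m - 1) = 0 := by
      rw [geom_sum_mul, ← pow_mul, mul_comm, pow_mul, hω.pow_eq_one, one_pow, sub_self]
    exact (mul_eq_zero.1 hmul).resolve_right hne

section UnitDiscPowerSeries

variable {f : ℂ → ℂ} {a : ℕ → ℂ}

theorem hasFPowerSeriesOnBall_ofScalars_of_hasSum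
    (hf : ∀ z : ℂ, ‖z‖ < 1 → HasSum (fun n => a n * z ^ n) (f z)) :
    HasFPowerSeriesOnBall f (ofScalars ℂ a) 0 1 where
  r_le := by
    refine ENNReal.le_of_forall_nnreal_lt fun s hs => (ofScalars ℂ a).le_radius_of_tendsto
      (l := 0) ?_
    have hs' : ‖(s : ℂ)‖ < 1 := by simpa using hs
    simpa [ofScalars_norm] using (hf s hs').summable.tendsto_atTop_zero.norm
  r_pos := one_pos
  hasSum {y} hy := by
    rw [eball_one_eq_ball, mem_ball_zero_iff] at hy
    simpa [ofScalars_apply_eq, mul_comm] using hf y hy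

theorem differentiableOn_ball_of_hasSum
    (hf : ∀ z : ℂ, ‖z‖ < 1 → HasSum (fun n => a n * z ^ n) (f z)) :
    DifferentiableOn ℂ f (ball 0 1) := by
  simpa [eball_one_eq_ball] using (hasFPowerSeriesOnBall_ofScalars_of_hasSum hf).differentiableOn

theorem apply_zero_eq_of_hasSum
    (hf : ∀ z : ℂ, ‖z‖ < 1 → HasSum (fun n => a n * z ^ n) (f z)) :
    f 0 = a 0 :=
  (hf 0 (by simp)).unique (hasSum_mul_zero_pow a)

theorem deriv_zero_eq_of_hasSum
    (hf : ∀ z : ℂ, ‖z‖ < 1 → HasSum (fun n => a n * z ^ n) (f z)) :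
    deriv f 0 = a 1 := by
  simp [(hasFPowerSeriesOnBall_ofScalars_of_hasSum hf).hasFPowerSeriesAt.deriv]

theorem hasSum_dslope_of_hasSum
    (hf : ∀ z : ℂ, ‖z‖ < 1 → HasSum (fun n => a n * z ^ n) (f z)) {z : ℂ} (hz : ‖z‖ < 1) :
    HasSum (fun n => a (n + 1) * z ^ n) (dslope f 0 z) := by
  rcases eq_or_ne z 0 with rfl | hz0
  · rw [dslope_same, deriv_zero_eq_of_hasSum hf]
    exact hasSum_mul_zero_pow _
  · have htail := ((hasSum_nat_add_iff' 1).2 (hf z hz)).mul_left z⁻¹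
    have hslope : dslope f 0 z = z⁻¹ * (f z - ∑ i ∈ range 1, a i * z ^ i) := by
      simp [dslope_of_ne f hz0, slope_def_field, apply_zero_eq_of_hasSum hf, div_eq_inv_mul]
    rw [hslope]
    refine htail.congr_fun fun n => ?_
    rw [pow_succ]
    field_simp

end UnitDiscPowerSeries

theorem norm_sub_le_norm_one_sub_conj_mul {u c : ℂ} (hu : ‖u‖ ≤ 1) (hc : ‖c‖ ≤ 1) :
    ‖u - c‖ ≤ ‖1 - conj c * u‖ := by
  have key : ‖1 - conj c * u‖ ^ 2 - ‖u - c‖ ^ 2 = (1 - ‖u‖ ^ 2) * (1 - ‖c‖ ^ 2) := by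
    simp only [Complex.sq_norm, normSq_apply, sub_re, sub_im, one_re, one_im, mul_re, mul_im,
      conj_re, conj_im]
    ring
  have hprod : 0 ≤ (1 - ‖u‖ ^ 2) * (1 - ‖c‖ ^ 2) := by
    apply mul_nonneg <;> nlinarith [norm_nonneg u, norm_nonneg c]
  exact (pow_le_pow_iff_left₀ (norm_nonneg _) (norm_nonneg _) two_ne_zero).1 (by linarith)

section SchwarzPick

variable {H : ℂ → ℂ}

theorem norm_deriv_zero_le_one_sub_norm_sq_of_norm_lt_one
    (hd : DifferentiableOn ℂ H (ball 0 1)) (hb : MapsTo H (ball 0 1) (closedBall 0 1))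
    (h0 : ‖H 0‖ < 1) :
    ‖deriv H 0‖ ≤ 1 - ‖H 0‖ ^ 2 := by
  set c := H 0 with hc
  have hconj : ∀ z ∈ ball (0 : ℂ) 1, ‖conj c * H z‖ < 1 := fun z hz => by
    rw [norm_mul, RCLike.norm_conj]
    exact mul_lt_one_of_nonneg_of_lt_one_left (norm_nonneg _) h0 (by simpa using hb hz)
  have hD : ∀ z ∈ ball (0 : ℂ) 1, 1 - conj c * H z ≠ 0 := fun z hz h => by
    simpa [← sub_eq_zero.1 h] using hconj z hz
  -- composing with the disc automorphism sending `c` to `0` reduces to Schwarz's lemma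
  set w : ℂ → ℂ := fun z => (H z - c) / (1 - conj c * H z)
  have hw : ‖deriv w 0‖ ≤ 1 := by
    have hwd : DifferentiableOn ℂ w (ball 0 1) :=
      (hd.sub_const c).div ((differentiableOn_const 1).sub (hd.const_mul _)) hD
    have hw0 : w 0 = 0 := by simp only [w, ← hc, sub_self, zero_div]
    have hmaps : MapsTo w (ball 0 1) (closedBall (w 0) 1) := fun z hz => by
      have hHz : ‖H z‖ ≤ 1 := by simpa using hb hz
      rw [hw0, mem_closedBall_zero_iff, norm_div]
      exact div_le_one_of_le₀ (norm_sub_le_norm_one_sub_conj_mul hHz h0.le) (norm_nonneg _)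
    simpa using norm_deriv_le_div_of_mapsTo_ball hwd hmaps one_pos
  have hD0 : 1 - conj c * c = ((1 - ‖c‖ ^ 2 : ℝ) : ℂ) := by
    rw [conj_mul']
    push_cast
    ring
  have hpos : 0 < 1 - ‖c‖ ^ 2 := by nlinarith [norm_nonneg c]
  have hH : HasDerivAt H (deriv H 0) 0 :=
    (hd.differentiableAt (isOpen_ball.mem_nhds (mem_ball_self one_pos))).hasDerivAt
  have hw' : deriv w 0 = deriv H 0 / ((1 - ‖c‖ ^ 2 : ℝ) : ℂ) := by
    have hne : 1 - conj c * c ≠ 0 := hD 0 (mem_ball_self one_pos)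
    have hdw : HasDerivAt w _ 0 := (hH.sub_const c).div ((hH.const_mul (conj c)).const_sub 1) hne
    rw [hdw.deriv, ← hc, ← hD0]
    field_simp
    ring
  rw [hw', norm_div, norm_real, Real.norm_of_nonneg hpos.le, div_le_one hpos] at hw
  exact hw

theorem norm_deriv_zero_le_one_sub_norm_sq
    (hd : DifferentiableOn ℂ H (ball 0 1)) (hb : MapsTo H (ball 0 1) (closedBall 0 1)) :
    ‖deriv H 0‖ ≤ 1 - ‖H 0‖ ^ 2 := by
  have hH0 : ‖H 0‖ ≤ 1 := by simpa using hb (mem_ball_self one_pos)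
  rcases hH0.lt_or_eq with h0 | h0
  · exact norm_deriv_zero_le_one_sub_norm_sq_of_norm_lt_one hd hb h0
  -- `|H 0| = 1` is a maximum of `|H|`, so `H` is constant near `0` by the maximum modulus principle
  have hmax : IsLocalMax (norm ∘ H) 0 := by
    filter_upwards [isOpen_ball.mem_nhds (mem_ball_self one_pos)] with z hz
    simpa [h0] using hb hz
  have hconst : H =ᶠ[𝓝 0] fun _ => H 0 := by
    refine eventually_eq_of_isLocalMax_norm ?_ hmax
    filter_upwards [isOpen_ball.mem_nhds (mem_ball_self one_pos)] with z hz
    exact hd.differentiableAt (isOpen_ball.mem_nhds hz)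
  simp [hconst.deriv_eq, h0]

end SchwarzPick

section Wiener

variable {g : ℂ → ℂ} {b : ℕ → ℂ}

/-- Averaging over the rotations `z ↦ ωʲ z` cancels every coefficient `b m` with `n ∤ m`. -/
theorem hasSum_coeff_mul_mul_pow_pow_of_isPrimitiveRoot
    (hg : ∀ z : ℂ, ‖z‖ < 1 → HasSum (fun m => b m * z ^ m) (g z))
    {n : ℕ} (hn : n ≠ 0) {ω : ℂ} (hω : IsPrimitiveRoot ω n) {z : ℂ} (hz : ‖z‖ < 1) :
    HasSum (fun k => b (n * k) * (z ^ n) ^ k) ((∑ j ∈ range n, g (ω ^ j * z)) / n) := by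
  have hrot : ∀ j, ‖ω ^ j * z‖ < 1 := fun j => by simpa [hω.norm'_eq_one hn] using hz
  have hsum : HasSum (fun m => if n ∣ m then (n : ℂ) * (b m * z ^ m) else 0)
      (∑ j ∈ range n, g (ω ^ j * z)) := by
    refine (hasSum_sum fun j _ => hg _ (hrot j)).congr_fun fun m => ?_
    have hterm : ∀ j, b m * (ω ^ j * z) ^ m = b m * z ^ m * (ω ^ m) ^ j := fun j => by ring
    rw [sum_congr rfl fun j _ => hterm j, ← mul_sum, hω.sum_pow_pow_eq_ite]
    split_ifs <;> ring
  have hsub := ((mul_right_injective₀ hn).hasSum_iff fun m hm => ?_).2 hsum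
  · refine (hsub.div_const (n : ℂ)).congr_fun fun k => ?_
    rw [Function.comp_apply, if_pos (dvd_mul_right n k), pow_mul]
    field_simp
  · rw [if_neg]
    rintro ⟨k, rfl⟩
    exact hm ⟨k, rfl⟩

theorem norm_coeff_le_one_sub_norm_sq
    (hg : ∀ z : ℂ, ‖z‖ < 1 → HasSum (fun m => b m * z ^ m) (g z))
    (hb : ∀ z : ℂ, ‖z‖ < 1 → ‖g z‖ ≤ 1) {n : ℕ} (hn : n ≠ 0) :
    ‖b n‖ ≤ 1 - ‖b 0‖ ^ 2 := by
  obtain ⟨ω, hω⟩ : ∃ ω : ℂ, IsPrimitiveRoot ω n := ⟨_, isPrimitiveRoot_exp n hn⟩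
  set H : ℂ → ℂ := fun w => ∑' k, b (n * k) * w ^ k
  have hH : ∀ w : ℂ, ‖w‖ < 1 → HasSum (fun k => b (n * k) * w ^ k) (H w) ∧ ‖H w‖ ≤ 1 := by
    intro w hw
    obtain ⟨z, rfl⟩ := IsAlgClosed.exists_pow_nat_eq w (Nat.pos_of_ne_zero hn)
    have hz : ‖z‖ < 1 := by
      rw [norm_pow] at hw
      exact (pow_lt_one_iff_of_nonneg (norm_nonneg z) hn).1 hw
    have hsum := hasSum_coeff_mul_mul_pow_pow_of_isPrimitiveRoot hg hn hω hz
    have hHz : H (z ^ n) = _ := hsum.tsum_eq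
    refine ⟨hHz ▸ hsum, ?_⟩
    rw [hHz, norm_div, norm_natCast, div_le_one (by positivity)]
    calc ‖∑ j ∈ range n, g (ω ^ j * z)‖ ≤ ∑ j ∈ range n, ‖g (ω ^ j * z)‖ := norm_sum_le _ _
      _ ≤ ∑ _j ∈ range n, 1 := sum_le_sum fun j _ => hb _ (by simpa [hω.norm'_eq_one hn] using hz)
      _ = n := by simp
  have hHs := fun w hw => (hH w hw).1
  have hpick := norm_deriv_zero_le_one_sub_norm_sq (differentiableOn_ball_of_hasSum hHs)
    fun w hw => by simpa using (hH w (by simpa using hw)).2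
  rwa [deriv_zero_eq_of_hasSum hHs, apply_zero_eq_of_hasSum hHs, mul_one, mul_zero] at hpick

end Wiener

theorem hasSum_add_one_mul_geometric {𝕜 : Type*} [NormedField 𝕜] [CompleteSpace 𝕜] {r : 𝕜}
    (hr : ‖r‖ < 1) :
    HasSum (fun n : ℕ => ((n : 𝕜) + 1) * r ^ n) (1 / (1 - r) ^ 2) := by
  simpa using hasSum_choose_mul_geometric_of_norm_lt_one 1 hr

theorem one_div_one_sub_sq_le_three_halves {r : ℝ} (hr : r ≤ 1 - √(2 / 3)) :
    1 / (1 - r) ^ 2 ≤ 3 / 2 := by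
  have hsq : √(2 / 3) ^ 2 = 2 / 3 := Real.sq_sqrt (by norm_num)
  have h : 2 / 3 ≤ (1 - r) ^ 2 := by
    rw [← hsq]; exact pow_le_pow_left₀ (Real.sqrt_nonneg _) (by linarith) 2
  rw [div_le_iff₀ (by linarith)]
  linarith

theorem tsum_add_one_mul_mul_pow_le_one {c : ℕ → ℝ} (hc : ∀ n, 0 ≤ c n)
    (hW : ∀ n, n ≠ 0 → c n ≤ 1 - c 0 ^ 2) {r : ℝ} (hr0 : 0 ≤ r) (hr : r ≤ 1 - √(2 / 3)) :
    ∑' n : ℕ, ((n : ℝ) + 1) * c n * r ^ n ≤ 1 := by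
  set t := c 0
  have hr1 : r < 1 := by linarith [Real.sqrt_pos.2 (show (0 : ℝ) < 2 / 3 by norm_num)]
  have ht : 0 ≤ 1 - t ^ 2 := (hc 1).trans (hW 1 one_ne_zero)
  have hS := hasSum_add_one_mul_geometric (r := r) (by rwa [Real.norm_of_nonneg hr0])
  -- termwise comparison with the extremal sequence `t, 1 - t², 1 - t², …`
  have hmaj : HasSum (fun n : ℕ => (1 - t ^ 2) * (((n : ℝ) + 1) * r ^ n)
      + if n = 0 then t - (1 - t ^ 2) else 0)
      ((1 - t ^ 2) * (1 / (1 - r) ^ 2) + (t - (1 - t ^ 2))) :=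
    (hS.mul_left _).add (hasSum_ite_eq 0 _)
  have hle : ∀ n : ℕ, ((n : ℝ) + 1) * c n * r ^ n ≤ (1 - t ^ 2) * (((n : ℝ) + 1) * r ^ n)
      + if n = 0 then t - (1 - t ^ 2) else 0 := by
    intro n
    split_ifs with hn
    · simp [hn, t]
    · have := mul_le_mul_of_nonneg_right (hW n hn) (by positivity : 0 ≤ ((n : ℝ) + 1) * r ^ n)
      linarith
  have hsum : Summable fun n : ℕ => ((n : ℝ) + 1) * c n * r ^ n :=
    hmaj.summable.of_nonneg_of_le (fun n => by have := hc n; positivity) hle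
  calc ∑' n : ℕ, ((n : ℝ) + 1) * c n * r ^ n
      ≤ (1 - t ^ 2) * (1 / (1 - r) ^ 2) + (t - (1 - t ^ 2)) := hasSum_le hle hsum.hasSum hmaj
    _ ≤ (1 - t ^ 2) * (3 / 2) + (t - (1 - t ^ 2)) := by
        gcongr _ * ?_ + _
        exact one_div_one_sub_sq_le_three_halves hr
    _ ≤ 1 := by nlinarith [sq_nonneg (1 - t)]

theorem bohr_schwarz_derivative_general (f : ℂ → ℂ) (a : ℕ → ℂ)
    (hf : ∀ z : ℂ, ‖z‖ < 1 → HasSum (fun n : ℕ => a n * z ^ n) (f z))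
    (hb : ∀ z : ℂ, ‖z‖ < 1 → ‖f z‖ ≤ 1)
    (hf0 : f 0 = 0)
    (r : ℝ) (hr0 : 0 ≤ r) (hr : r ≤ 1 - Real.sqrt (2 / 3)) :
    ∑' n : ℕ, ((n : ℝ) + 1) * ‖a (n + 1)‖ * r ^ n ≤ 1 := by
  have hg : ∀ z : ℂ, ‖z‖ < 1 → HasSum (fun n => a (n + 1) * z ^ n) (dslope f 0 z) :=
    fun z hz => hasSum_dslope_of_hasSum hf hz
  have hgb : ∀ z : ℂ, ‖z‖ < 1 → ‖dslope f 0 z‖ ≤ 1 := fun z hz => by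
    have hmaps : MapsTo f (ball 0 1) (closedBall (f 0) 1) := fun w hw => by
      simpa [hf0] using hb w (by simpa using hw)
    simpa using norm_dslope_le_div_of_mapsTo_ball (differentiableOn_ball_of_hasSum hf) hmaps
      (mem_ball_zero_iff.2 hz)
  exact tsum_add_one_mul_mul_pow_le_one (fun n => norm_nonneg _)
    (fun n hn => norm_coeff_le_one_sub_norm_sq (n := n) hg hgb hn) hr0 hr

/-- Bohr inequality for the derivative of a Schwarz function (Bhowmik–Das): if
`f = Σ_{n≥1} aₙ zⁿ` is analytic on the unit disk with `|f| ≤ 1` and `f(0) = 0`,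
then `Σ_{n≥0} (n+1)|a_{n+1}| rⁿ ≤ 1` for `0 ≤ r ≤ 1 − √(2/3)`. -/
theorem bohr_schwarz_derivative (f : ℂ → ℂ) (a : ℕ → ℂ)
    (hf : ∀ z : ℂ, ‖z‖ < 1 → HasSum (fun n : ℕ => a n * z ^ n) (f z))
    (hb : ∀ z : ℂ, ‖z‖ < 1 → ‖f z‖ ≤ 1)
    (ha0 : a 0 = 0) (hf0 : f 0 = 0)
    (r : ℝ) (hr0 : 0 ≤ r) (hr : r ≤ 1 - Real.sqrt (2 / 3)) :
    ∑' n : ℕ, ((n : ℝ) + 1) * ‖a (n + 1)‖ * r ^ n ≤ 1 :=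
  bohr_schwarz_derivative_general f a hf hb hf0 r hr0 hr
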